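/- In ℝ², the function F(θ) = (a₁₁ cos²θ + 2 a₂₁ cos θ sin θ + a₂₂ sin²θ)^{1/2} arising from η(v) = sqrt(vᵀ A v) with symmetric matrix A = [[a₁₁, a₂₁],[a₂₁, a₂₂]] satisfies F(θ) + F''(θ) = det(A) / F(θ)³ at every θ where F(θ) > 0. -/

import Mathlib

/-!
Writing `F = √Q`, the quotient rule gives `F + F'' = (4 Q² + 2 Q Q'' - Q'²) / (4 F³)` for any
positive twice differentiable `Q`. For the quadratic form `Q(θ) = vᵀ A v` with `v = (cos θ, sin θ)`,
the numerator `4 Q² + 2 Q Q'' - Q'²` is the constant `4 det A`: in double angles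
`Q = α + β cos 2θ + γ sin 2θ`, and the numerator reduces to `4 (α² - β² - γ²)`.
-/

open Real

section SqrtSecondDeriv

variable {Q Q' : ℝ → ℝ} {Q'' θ : ℝ}

theorem hasDerivAt_deriv_sqrt (hQ : ∀ x, HasDerivAt Q (Q' x) x) (hQ' : HasDerivAt Q' Q'' θ)
    (hpos : 0 < Q θ) :
    HasDerivAt (deriv fun x => √(Q x)) ((2 * Q θ * Q'' - Q' θ ^ 2) / (4 * √(Q θ) ^ 3)) θ := by
  have hQcont : Continuous Q := continuous_iff_continuousAt.2 fun x => (hQ x).continuousAt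
  have hderiv : deriv (fun x => √(Q x)) =ᶠ[nhds θ] fun x => Q' x / (2 * √(Q x)) := by
    filter_upwards [hQcont.continuousAt.eventually (eventually_gt_nhds hpos)] with x hx
    exact ((hQ x).sqrt hx.ne').deriv
  have hsqrt_pos : 0 < √(Q θ) := sqrt_pos.2 hpos
  refine ((hQ'.div (((hQ θ).sqrt hpos.ne').const_mul 2) (by positivity)).congr_deriv ?_)
    |>.congr_of_eventuallyEq hderiv
  have hsq : √(Q θ) ^ 2 = Q θ := sq_sqrt hpos.le
  set s := √(Q θ)
  rw [← hsq]
  field_simp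
  ring

theorem sqrt_add_deriv_deriv_sqrt (hQ : ∀ x, HasDerivAt Q (Q' x) x)
    (hQ' : HasDerivAt Q' Q'' θ) (hpos : 0 < Q θ) :
    √(Q θ) + deriv (deriv fun x => √(Q x)) θ
      = (4 * Q θ ^ 2 + 2 * Q θ * Q'' - Q' θ ^ 2) / (4 * √(Q θ) ^ 3) := by
  rw [(hasDerivAt_deriv_sqrt hQ hQ' hpos).deriv]
  have hsqrt_pos : 0 < √(Q θ) := sqrt_pos.2 hpos
  have hsq : √(Q θ) ^ 2 = Q θ := sq_sqrt hpos.le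
  set s := √(Q θ)
  rw [← hsq]
  field_simp
  ring

end SqrtSecondDeriv

section PolarQuadraticForm

variable (a11 a21 a22 : ℝ)

noncomputable def polarQuad (θ : ℝ) : ℝ :=
  a11 * cos θ ^ 2 + 2 * a21 * cos θ * sin θ + a22 * sin θ ^ 2

noncomputable def polarQuadDeriv (θ : ℝ) : ℝ :=
  (a22 - a11) * sin (2 * θ) + 2 * a21 * cos (2 * θ)

theorem polarQuad_eq_double_angle (θ : ℝ) :
    polarQuad a11 a21 a22 θ
      = (a11 + a22) / 2 + (a11 - a22) / 2 * cos (2 * θ) + a21 * sin (2 * θ) := by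
  rw [polarQuad, cos_two_mul, sin_two_mul]
  linear_combination a22 * sin_sq_add_cos_sq θ

theorem hasDerivAt_polarQuad (θ : ℝ) :
    HasDerivAt (polarQuad a11 a21 a22) (polarQuadDeriv a11 a21 a22 θ) θ := by
  have h2 : HasDerivAt (fun x : ℝ => 2 * x) 2 θ := hasDerivAt_const_mul 2
  rw [funext (polarQuad_eq_double_angle a11 a21 a22)]
  refine ((((h2.cos).const_mul ((a11 - a22) / 2)).const_add ((a11 + a22) / 2)).add
    ((h2.sin).const_mul a21)).congr_deriv ?_
  rw [polarQuadDeriv]; ring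

theorem hasDerivAt_polarQuadDeriv (θ : ℝ) :
    HasDerivAt (polarQuadDeriv a11 a21 a22)
      (2 * (a22 - a11) * cos (2 * θ) - 4 * a21 * sin (2 * θ)) θ := by
  have h2 : HasDerivAt (fun x : ℝ => 2 * x) 2 θ := hasDerivAt_const_mul 2
  refine (((h2.sin).const_mul (a22 - a11)).add ((h2.cos).const_mul (2 * a21))).congr_deriv ?_
  ring

theorem polarQuad_curvature_numerator (θ : ℝ) :
    4 * polarQuad a11 a21 a22 θ ^ 2
        + 2 * polarQuad a11 a21 a22 θ * (2 * (a22 - a11) * cos (2 * θ) - 4 * a21 * sin (2 * θ))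
        - polarQuadDeriv a11 a21 a22 θ ^ 2
      = 4 * (a11 * a22 - a21 ^ 2) := by
  rw [polarQuad_eq_double_angle, polarQuadDeriv]
  linear_combination (-(a11 - a22) ^ 2 - 4 * a21 ^ 2) * sin_sq_add_cos_sq (2 * θ)

end PolarQuadraticForm

theorem polar_convexity_quadratic_form (a11 a21 a22 : ℝ)
    (F : ℝ → ℝ)
    (hF : F = fun θ => Real.sqrt
      (a11 * cos θ ^ 2 + 2 * a21 * cos θ * sin θ + a22 * sin θ ^ 2)) :
    ∀ θ : ℝ, 0 < F θ →
      F θ + deriv (deriv F) θ = (a11 * a22 - a21 ^ 2) / (F θ) ^ 3 := by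
  intro θ hθ
  have hF' : F = fun θ => √(polarQuad a11 a21 a22 θ) := hF
  subst hF'
  have hpos : 0 < polarQuad a11 a21 a22 θ := sqrt_pos.1 hθ
  rw [sqrt_add_deriv_deriv_sqrt (hasDerivAt_polarQuad a11 a21 a22)
    (hasDerivAt_polarQuadDeriv a11 a21 a22 θ) hpos, polarQuad_curvature_numerator]
  field_simp
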